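/- arXiv:hep-th/0210171 — 2 statements merged into one kernel-verified Lean document; each statement's English description precedes it below -/
import Mathlib

section
/- First-order noncommutative correction vanishes on a plane wave: with F the plane-wave field strength F_{μν}(x) = K_μ Φ'_ν(K·x) − K_ν Φ'_μ(K·x), K null, K^μΦ'_μ = 0, and θ an antisymmetric constant matrix, define F̃^{(1)μν} = −(1/2)(θ^{αβ}F_{αβ}) F^{μν} − (1/4) θ^{μν} (F^{αβ}F_{αβ}) + θ_{αβ} F^{μα} F^{νβ} + (θ^{μβ}F^{αν} − θ^{νβ}F^{αμ}) F_{αβ}. Then ∂_ν F̃^{(1)μν} = 0 for all μ. -/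
open scoped BigOperators

noncomputable section

/-- Diagonal entries of the Minkowski metric η = diag(1,-1,-1,-1). -/
def ηd (i : Fin 4) : ℝ := if i = 0 then 1 else -1

/-- Minkowski bilinear form on ℝ⁴ (vectors in upper components). -/
def mink (v w : Fin 4 → ℝ) : ℝ := ∑ i, ηd i * v i * w i

/-- Partial derivative ∂_i of a scalar field on ℝ⁴. -/
def pd (i : Fin 4) (f : (Fin 4 → ℝ) → ℝ) (x : Fin 4 → ℝ) : ℝ :=
  fderiv ℝ f x (Pi.single i 1)

/-- Plane-wave field strength, lower components. -/
def Flo (K : Fin 4 → ℝ) (Φ : ℝ → Fin 4 → ℝ) (x : Fin 4 → ℝ) (μ ν : Fin 4) : ℝ :=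
  ηd μ * K μ * deriv (fun t => Φ t ν) (mink K x)
    - ηd ν * K ν * deriv (fun t => Φ t μ) (mink K x)

/-- Plane-wave field strength, upper components F^{μν} = η^{μμ}η^{νν}F_{μν}. -/
def Fhi (K : Fin 4 → ℝ) (Φ : ℝ → Fin 4 → ℝ) (x : Fin 4 → ℝ) (μ ν : Fin 4) : ℝ :=
  ηd μ * ηd ν * Flo K Φ x μ ν

/-- First-order NC correction to the field strength (upper components):
F̃^{(1)μν} = −(1/2)(θF)F^{μν} − (1/4)θ^{μν}F² + θ_{αβ}F^{μα}F^{νβ}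
            + (θ^{μβ}F^{αν} − θ^{νβ}F^{αμ})F_{αβ}. -/
def Ftil1 (θ : Fin 4 → Fin 4 → ℝ) (K : Fin 4 → ℝ) (Φ : ℝ → Fin 4 → ℝ)
    (x : Fin 4 → ℝ) (μ ν : Fin 4) : ℝ :=
  -(1/2) * (∑ α, ∑ β, θ α β * Flo K Φ x α β) * Fhi K Φ x μ ν
    - (1/4) * θ μ ν * (∑ α, ∑ β, Fhi K Φ x α β * Flo K Φ x α β)
    + (∑ α, ∑ β, (ηd α * ηd β * θ α β) * Fhi K Φ x μ α * Fhi K Φ x ν β)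
    + (∑ α, ∑ β, (θ μ β * Fhi K Φ x α ν - θ ν β * Fhi K Φ x α μ) * Flo K Φ x α β)

lemma ηd0 : ηd 0 = 1 := rfl
lemma ηd1 : ηd 1 = -1 := rfl
lemma ηd2 : ηd 2 = -1 := rfl
lemma ηd3 : ηd 3 = -1 := rfl

def FLc (K A : Fin 4 → ℝ) (μ ν : Fin 4) : ℝ :=
  ηd μ * K μ * A ν - ηd ν * K ν * A μ

def FHc (K A : Fin 4 → ℝ) (μ ν : Fin 4) : ℝ := ηd μ * ηd ν * FLc K A μ ν

def FT1c (θ : Fin 4 → Fin 4 → ℝ) (K A : Fin 4 → ℝ) (μ ν : Fin 4) : ℝ :=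
  -(1/2) * (∑ α, ∑ β, θ α β * FLc K A α β) * FHc K A μ ν
    - (1/4) * θ μ ν * (∑ α, ∑ β, FHc K A α β * FLc K A α β)
    + (∑ α, ∑ β, (ηd α * ηd β * θ α β) * FHc K A μ α * FHc K A ν β)
    + (∑ α, ∑ β, (θ μ β * FHc K A α ν - θ ν β * FHc K A α μ) * FLc K A α β)

set_option maxRecDepth 4000 in
set_option maxHeartbeats 1600000 in
lemma key (θ : Fin 4 → Fin 4 → ℝ) (hθ : ∀ a b, θ a b = -θ b a) (K A : Fin 4 → ℝ)
    (hQ1 : (∑ i, ηd i * K i * K i) = 0) (hQ2 : (∑ i, K i * A i) = 0) (μ : Fin 4) :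
    (∑ ν, ηd ν * K ν * FT1c θ K A μ ν) = 0 := by
  have h1 : K 0 * K 0 - K 1 * K 1 - K 2 * K 2 - K 3 * K 3 = 0 := by
    have h := hQ1
    simp [ηd, Fin.sum_univ_four] at h
    linarith
  have h2 : K 0 * A 0 + K 1 * A 1 + K 2 * A 2 + K 3 * A 3 = 0 := by
    have h := hQ2
    simpa [Fin.sum_univ_four] using h
  have hcase : ∀ m : Fin 4, m = 0 ∨ m = 1 ∨ m = 2 ∨ m = 3 := by decide
  rcases hcase μ with h | h | h | h <;> subst h <;>
    simp only [FT1c, FHc, FLc, Fin.sum_univ_four, ηd0, ηd1, ηd2, ηd3]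
  · linear_combination ((-3/2) * A 0 * A 1 * K 0 * θ 0 1 + (1/2) * A 0 * A 1 * K 0 * θ 1 0 + (-1) * A 0 * A 1 * K 1 * θ 0 0 + (2) * A 0 * A 1 * K 1 * θ 1 1 + (1/2) * A 0 * A 1 * K 2 * θ 1 2 + (3/2) * A 0 * A 1 * K 2 * θ 2 1 + (1/2) * A 0 * A 1 * K 3 * θ 1 3 + (3/2) * A 0 * A 1 * K 3 * θ 3 1 + (-3/2) * A 0 * A 2 * K 0 * θ 0 2 + (1/2) * A 0 * A 2 * K 0 * θ 2 0 + (3/2) * A 0 * A 2 * K 1 * θ 1 2 + (1/2) * A 0 * A 2 * K 1 * θ 2 1 + (-1) * A 0 * A 2 * K 2 * θ 0 0 + (2) * A 0 * A 2 * K 2 * θ 2 2 + (1/2) * A 0 * A 2 * K 3 * θ 2 3 + (3/2) * A 0 * A 2 * K 3 * θ 3 2 + (-3/2) * A 0 * A 3 * K 0 * θ 0 3 + (1/2) * A 0 * A 3 * K 0 * θ 3 0 + (3/2) * A 0 * A 3 * K 1 * θ 1 3 + (1/2) * A 0 * A 3 * K 1 * θ 3 1 + (3/2) * A 0 * A 3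 * K 2 * θ 2 3 + (1/2) * A 0 * A 3 * K 2 * θ 3 2 + (-1) * A 0 * A 3 * K 3 * θ 0 0 + (2) * A 0 * A 3 * K 3 * θ 3 3 + (-3/2) * A 0 * A 0 * K 0 * θ 0 0 + (3/2) * A 0 * A 0 * K 1 * θ 1 0 + (3/2) * A 0 * A 0 * K 2 * θ 2 0 + (3/2) * A 0 * A 0 * K 3 * θ 3 0 + (1) * A 1 * A 2 * K 0 * θ 1 2 + (1) * A 1 * A 2 * K 0 * θ 2 1 + (-1) * A 1 * A 2 * K 1 * θ 0 2 + (-1) * A 1 * A 2 * K 2 * θ 0 1 + (1) * A 1 * A 3 * K 0 * θ 1 3 + (1) * A 1 * A 3 * K 0 * θ 3 1 + (-1) * A 1 * A 3 * K 1 * θ 0 3 + (-1) * A 1 * A 3 * K 3 * θ 0 1 + (-1/2) * A 1 * A 1 * K 0 * θ 0 0 + (1) * A 1 * A 1 * K 0 * θ 1 1 + (-1/2) * A 1 * A 1 * K 1 * θ 0 1 + (1/2) * A 1 * A 1 * K 2 * θ 0 2 + (1/2) * A 1 * A 1 * K 3 * θ 0 3 + (1) * A 2 * A 3 * K 0 *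 θ 2 3 + (1) * A 2 * A 3 * K 0 * θ 3 2 + (-1) * A 2 * A 3 * K 2 * θ 0 3 + (-1) * A 2 * A 3 * K 3 * θ 0 2 + (-1/2) * A 2 * A 2 * K 0 * θ 0 0 + (1) * A 2 * A 2 * K 0 * θ 2 2 + (1/2) * A 2 * A 2 * K 1 * θ 0 1 + (-1/2) * A 2 * A 2 * K 2 * θ 0 2 + (1/2) * A 2 * A 2 * K 3 * θ 0 3 + (-1/2) * A 3 * A 3 * K 0 * θ 0 0 + (1) * A 3 * A 3 * K 0 * θ 3 3 + (1/2) * A 3 * A 3 * K 1 * θ 0 1 + (1/2) * A 3 * A 3 * K 2 * θ 0 2 + (-1/2) * A 3 * A 3 * K 3 * θ 0 3) * h1 + ((-1) * A 0 * K 0 * K 1 * θ 0 1 + (-5/2) * A 0 * K 0 * K 1 * θ 1 0 + (-1) * A 0 * K 0 * K 2 * θ 0 2 + (-5/2) * A 0 * K 0 * K 2 * θ 2 0 + (-1) * A 0 * K 0 * K 3 * θ 0 3 + (-5/2) * A 0 * K 0 * K 3 * θ 3 0 + (5/2) * A 0 * K 0 * K 0 * θ 0 0 + (2) * A 0 * K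 1 * K 2 * θ 1 2 + (2) * A 0 * K 1 * K 2 * θ 2 1 + (2) * A 0 * K 1 * K 3 * θ 1 3 + (2) * A 0 * K 1 * K 3 * θ 3 1 + (-1) * A 0 * K 1 * K 1 * θ 0 0 + (2) * A 0 * K 1 * K 1 * θ 1 1 + (2) * A 0 * K 2 * K 3 * θ 2 3 + (2) * A 0 * K 2 * K 3 * θ 3 2 + (-1) * A 0 * K 2 * K 2 * θ 0 0 + (2) * A 0 * K 2 * K 2 * θ 2 2 + (-1) * A 0 * K 3 * K 3 * θ 0 0 + (2) * A 0 * K 3 * K 3 * θ 3 3 + (-1/2) * A 1 * K 0 * K 1 * θ 0 0 + (1/2) * A 1 * K 0 * K 2 * θ 1 2 + (-1/2) * A 1 * K 0 * K 2 * θ 2 1 + (1/2) * A 1 * K 0 * K 3 * θ 1 3 + (-1/2) * A 1 * K 0 * K 3 * θ 3 1 + (3/2) * A 1 * K 0 * K 0 * θ 0 1 + (-1/2) * A 1 * K 0 * K 0 * θ 1 0 + (1/2) * A 1 * K 1 * K 2 * θ 0 2 + (1/2) * A 1 * K 1 * K 3 * θ 0 3 + (-1/2) * A 1 * K 1 * K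 1 * θ 0 1 + (-1) * A 1 * K 2 * K 2 * θ 0 1 + (-1) * A 1 * K 3 * K 3 * θ 0 1 + (-1/2) * A 2 * K 0 * K 1 * θ 1 2 + (1/2) * A 2 * K 0 * K 1 * θ 2 1 + (-1/2) * A 2 * K 0 * K 2 * θ 0 0 + (1/2) * A 2 * K 0 * K 3 * θ 2 3 + (-1/2) * A 2 * K 0 * K 3 * θ 3 2 + (3/2) * A 2 * K 0 * K 0 * θ 0 2 + (-1/2) * A 2 * K 0 * K 0 * θ 2 0 + (1/2) * A 2 * K 1 * K 2 * θ 0 1 + (-1) * A 2 * K 1 * K 1 * θ 0 2 + (1/2) * A 2 * K 2 * K 3 * θ 0 3 + (-1/2) * A 2 * K 2 * K 2 * θ 0 2 + (-1) * A 2 * K 3 * K 3 * θ 0 2 + (-1/2) * A 3 * K 0 * K 1 * θ 1 3 + (1/2) * A 3 * K 0 * K 1 * θ 3 1 + (-1/2) * A 3 * K 0 * K 2 * θ 2 3 + (1/2) * A 3 * K 0 * K 2 * θ 3 2 + (-1/2) * A 3 * K 0 * K 3 * θ 0 0 + (3/2) * A 3 * K 0 * K 0 * θ 0 3 + (-1/2)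 * A 3 * K 0 * K 0 * θ 3 0 + (1/2) * A 3 * K 1 * K 3 * θ 0 1 + (-1) * A 3 * K 1 * K 1 * θ 0 3 + (1/2) * A 3 * K 2 * K 3 * θ 0 2 + (-1) * A 3 * K 2 * K 2 * θ 0 3 + (-1/2) * A 3 * K 3 * K 3 * θ 0 3) * h2 + ((-1/2) * A 0 * A 0 * K 0 * K 0 * K 0 + (1/2) * A 1 * A 1 * K 0 * K 0 * K 0 + (1/2) * A 2 * A 2 * K 0 * K 0 * K 0 + (1/2) * A 3 * A 3 * K 0 * K 0 * K 0) * hθ 0 0 + ((1) * A 0 * A 0 * K 0 * K 0 * K 1 + (-1) * A 1 * A 1 * K 0 * K 0 * K 1 + (-1) * A 2 * A 2 * K 0 * K 0 * K 1 + (-1) * A 3 * A 3 * K 0 * K 0 * K 1) * hθ 0 1 + ((1) * A 0 * A 0 * K 0 * K 0 * K 2 + (-1) * A 1 * A 1 * K 0 * K 0 * K 2 + (-1) * A 2 * A 2 * K 0 * K 0 * K 2 + (-1) * A 3 * A 3 * K 0 * K 0 * K 2) * hθ 0 2 + ((1) * A 0 * A 0 * K 0 * K 0 * K 3 + (-1)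 * A 1 * A 1 * K 0 * K 0 * K 3 + (-1) * A 2 * A 2 * K 0 * K 0 * K 3 + (-1) * A 3 * A 3 * K 0 * K 0 * K 3) * hθ 0 3 + ((-1/2) * A 0 * A 0 * K 0 * K 1 * K 1 + (1/2) * A 1 * A 1 * K 0 * K 1 * K 1 + (1/2) * A 2 * A 2 * K 0 * K 1 * K 1 + (1/2) * A 3 * A 3 * K 0 * K 1 * K 1) * hθ 1 1 + ((-1) * A 0 * A 0 * K 0 * K 1 * K 2 + (1) * A 1 * A 1 * K 0 * K 1 * K 2 + (1) * A 2 * A 2 * K 0 * K 1 * K 2 + (1) * A 3 * A 3 * K 0 * K 1 * K 2) * hθ 1 2 + ((-1) * A 0 * A 0 * K 0 * K 1 * K 3 + (1) * A 1 * A 1 * K 0 * K 1 * K 3 + (1) * A 2 * A 2 * K 0 * K 1 * K 3 + (1) * A 3 * A 3 * K 0 * K 1 * K 3) * hθ 1 3 + ((-1/2) * A 0 * A 0 * K 0 * K 2 * K 2 + (1/2) * A 1 * A 1 * K 0 * K 2 * K 2 + (1/2) * A 2 * A 2 * K 0 * K 2 * K 2 + (1/2) * A 3 * A 3 * K 0 *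 K 2 * K 2) * hθ 2 2 + ((-1) * A 0 * A 0 * K 0 * K 2 * K 3 + (1) * A 1 * A 1 * K 0 * K 2 * K 3 + (1) * A 2 * A 2 * K 0 * K 2 * K 3 + (1) * A 3 * A 3 * K 0 * K 2 * K 3) * hθ 2 3 + ((-1/2) * A 0 * A 0 * K 0 * K 3 * K 3 + (1/2) * A 1 * A 1 * K 0 * K 3 * K 3 + (1/2) * A 2 * A 2 * K 0 * K 3 * K 3 + (1/2) * A 3 * A 3 * K 0 * K 3 * K 3) * hθ 3 3
  · linear_combination ((2) * A 0 * A 1 * K 0 * θ 0 0 + (-1) * A 0 * A 1 * K 0 * θ 1 1 + (1/2) * A 0 * A 1 * K 1 * θ 0 1 + (-3/2) * A 0 * A 1 * K 1 * θ 1 0 + (-1/2) * A 0 * A 1 * K 2 * θ 0 2 + (-3/2) * A 0 * A 1 * K 2 * θ 2 0 + (-1/2) * A 0 * A 1 * K 3 * θ 0 3 + (-3/2) * A 0 * A 1 * K 3 * θ 3 0 + (-1) * A 0 * A 2 * K 0 * θ 1 2 + (1) * A 0 * A 2 * K 1 * θ 0 2 + (1) * A 0 * A 2 * K 1 * θ 2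 0 + (-1) * A 0 * A 2 * K 2 * θ 1 0 + (-1) * A 0 * A 3 * K 0 * θ 1 3 + (1) * A 0 * A 3 * K 1 * θ 0 3 + (1) * A 0 * A 3 * K 1 * θ 3 0 + (-1) * A 0 * A 3 * K 3 * θ 1 0 + (-1/2) * A 0 * A 0 * K 0 * θ 1 0 + (1) * A 0 * A 0 * K 1 * θ 0 0 + (-1/2) * A 0 * A 0 * K 1 * θ 1 1 + (-1/2) * A 0 * A 0 * K 2 * θ 1 2 + (-1/2) * A 0 * A 0 * K 3 * θ 1 3 + (3/2) * A 1 * A 2 * K 0 * θ 0 2 + (1/2) * A 1 * A 2 * K 0 * θ 2 0 + (-3/2) * A 1 * A 2 * K 1 * θ 1 2 + (1/2) * A 1 * A 2 * K 1 * θ 2 1 + (-1) * A 1 * A 2 * K 2 * θ 1 1 + (-2) * A 1 * A 2 * K 2 * θ 2 2 + (-1/2) * A 1 * A 2 * K 3 * θ 2 3 + (-3/2) * A 1 * A 2 * K 3 * θ 3 2 + (3/2) * A 1 * A 3 * K 0 * θ 0 3 + (1/2) * A 1 * A 3 * K 0 * θ 3 0 + (-3/2) * A 1 * A 3 * K 1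 * θ 1 3 + (1/2) * A 1 * A 3 * K 1 * θ 3 1 + (-3/2) * A 1 * A 3 * K 2 * θ 2 3 + (-1/2) * A 1 * A 3 * K 2 * θ 3 2 + (-1) * A 1 * A 3 * K 3 * θ 1 1 + (-2) * A 1 * A 3 * K 3 * θ 3 3 + (3/2) * A 1 * A 1 * K 0 * θ 0 1 + (-3/2) * A 1 * A 1 * K 1 * θ 1 1 + (-3/2) * A 1 * A 1 * K 2 * θ 2 1 + (-3/2) * A 1 * A 1 * K 3 * θ 3 1 + (1) * A 2 * A 3 * K 1 * θ 2 3 + (1) * A 2 * A 3 * K 1 * θ 3 2 + (-1) * A 2 * A 3 * K 2 * θ 1 3 + (-1) * A 2 * A 3 * K 3 * θ 1 2 + (-1/2) * A 2 * A 2 * K 0 * θ 1 0 + (1/2) * A 2 * A 2 * K 1 * θ 1 1 + (1) * A 2 * A 2 * K 1 * θ 2 2 + (-1/2) * A 2 * A 2 * K 2 * θ 1 2 + (1/2) * A 2 * A 2 * K 3 * θ 1 3 + (-1/2) * A 3 * A 3 * K 0 * θ 1 0 + (1/2) * A 3 * A 3 * K 1 * θ 1 1 + (1) * A 3 * A 3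 * K 1 * θ 3 3 + (1/2) * A 3 * A 3 * K 2 * θ 1 2 + (-1/2) * A 3 * A 3 * K 3 * θ 1 3) * h1 + ((1/2) * A 0 * K 0 * K 1 * θ 1 1 + (1/2) * A 0 * K 0 * K 2 * θ 1 2 + (1/2) * A 0 * K 0 * K 3 * θ 1 3 + (1/2) * A 0 * K 0 * K 0 * θ 1 0 + (1/2) * A 0 * K 1 * K 2 * θ 0 2 + (-1/2) * A 0 * K 1 * K 2 * θ 2 0 + (1/2) * A 0 * K 1 * K 3 * θ 0 3 + (-1/2) * A 0 * K 1 * K 3 * θ 3 0 + (1/2) * A 0 * K 1 * K 1 * θ 0 1 + (-3/2) * A 0 * K 1 * K 1 * θ 1 0 + (-1) * A 0 * K 2 * K 2 * θ 1 0 + (-1) * A 0 * K 3 * K 3 * θ 1 0 + (5/2) * A 1 * K 0 * K 1 * θ 0 1 + (1) * A 1 * K 0 * K 1 * θ 1 0 + (2) * A 1 * K 0 * K 2 * θ 0 2 + (2) * A 1 * K 0 * K 2 * θ 2 0 + (2) * A 1 * K 0 * K 3 * θ 0 3 + (2) * A 1 * K 0 * K 3 * θ 3 0 + (-2) * A 1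 * K 0 * K 0 * θ 0 0 + (1) * A 1 * K 0 * K 0 * θ 1 1 + (-1) * A 1 * K 1 * K 2 * θ 1 2 + (-5/2) * A 1 * K 1 * K 2 * θ 2 1 + (-1) * A 1 * K 1 * K 3 * θ 1 3 + (-5/2) * A 1 * K 1 * K 3 * θ 3 1 + (-5/2) * A 1 * K 1 * K 1 * θ 1 1 + (-2) * A 1 * K 2 * K 3 * θ 2 3 + (-2) * A 1 * K 2 * K 3 * θ 3 2 + (-1) * A 1 * K 2 * K 2 * θ 1 1 + (-2) * A 1 * K 2 * K 2 * θ 2 2 + (-1) * A 1 * K 3 * K 3 * θ 1 1 + (-2) * A 1 * K 3 * K 3 * θ 3 3 + (1/2) * A 2 * K 0 * K 1 * θ 0 2 + (-1/2) * A 2 * K 0 * K 1 * θ 2 0 + (-1/2) * A 2 * K 0 * K 2 * θ 1 0 + (1) * A 2 * K 0 * K 0 * θ 1 2 + (1/2) * A 2 * K 1 * K 2 * θ 1 1 + (1/2) * A 2 * K 1 * K 3 * θ 2 3 + (-1/2) * A 2 * K 1 * K 3 * θ 3 2 + (-3/2) * A 2 * K 1 * K 1 * θ 1 2 + (1/2)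 * A 2 * K 1 * K 1 * θ 2 1 + (1/2) * A 2 * K 2 * K 3 * θ 1 3 + (-1/2) * A 2 * K 2 * K 2 * θ 1 2 + (-1) * A 2 * K 3 * K 3 * θ 1 2 + (1/2) * A 3 * K 0 * K 1 * θ 0 3 + (-1/2) * A 3 * K 0 * K 1 * θ 3 0 + (-1/2) * A 3 * K 0 * K 3 * θ 1 0 + (1) * A 3 * K 0 * K 0 * θ 1 3 + (-1/2) * A 3 * K 1 * K 2 * θ 2 3 + (1/2) * A 3 * K 1 * K 2 * θ 3 2 + (1/2) * A 3 * K 1 * K 3 * θ 1 1 + (-3/2) * A 3 * K 1 * K 1 * θ 1 3 + (1/2) * A 3 * K 1 * K 1 * θ 3 1 + (1/2) * A 3 * K 2 * K 3 * θ 1 2 + (-1) * A 3 * K 2 * K 2 * θ 1 3 + (-1/2) * A 3 * K 3 * K 3 * θ 1 3) * h2 + ((-1/2) * A 0 * A 0 * K 0 * K 0 * K 1 + (1/2) * A 1 * A 1 * K 0 * K 0 * K 1 + (1/2) * A 2 * A 2 * K 0 * K 0 * K 1 + (1/2) * A 3 * A 3 * K 0 * K 0 * K 1) * hθ 0 0 +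 ((1) * A 0 * A 0 * K 0 * K 1 * K 1 + (-1) * A 1 * A 1 * K 0 * K 1 * K 1 + (-1) * A 2 * A 2 * K 0 * K 1 * K 1 + (-1) * A 3 * A 3 * K 0 * K 1 * K 1) * hθ 0 1 + ((1) * A 0 * A 0 * K 0 * K 1 * K 2 + (-1) * A 1 * A 1 * K 0 * K 1 * K 2 + (-1) * A 2 * A 2 * K 0 * K 1 * K 2 + (-1) * A 3 * A 3 * K 0 * K 1 * K 2) * hθ 0 2 + ((1) * A 0 * A 0 * K 0 * K 1 * K 3 + (-1) * A 1 * A 1 * K 0 * K 1 * K 3 + (-1) * A 2 * A 2 * K 0 * K 1 * K 3 + (-1) * A 3 * A 3 * K 0 * K 1 * K 3) * hθ 0 3 + ((-1/2) * A 0 * A 0 * K 1 * K 1 * K 1 + (1/2) * A 1 * A 1 * K 1 * K 1 * K 1 + (1/2) * A 2 * A 2 * K 1 * K 1 * K 1 + (1/2) * A 3 * A 3 * K 1 * K 1 * K 1) * hθ 1 1 + ((-1) * A 0 * A 0 * K 1 * K 1 * K 2 + (1) * A 1 * A 1 * K 1 * K 1 * K 2 + (1) * A 2 * A 2 * K 1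 * K 1 * K 2 + (1) * A 3 * A 3 * K 1 * K 1 * K 2) * hθ 1 2 + ((-1) * A 0 * A 0 * K 1 * K 1 * K 3 + (1) * A 1 * A 1 * K 1 * K 1 * K 3 + (1) * A 2 * A 2 * K 1 * K 1 * K 3 + (1) * A 3 * A 3 * K 1 * K 1 * K 3) * hθ 1 3 + ((-1/2) * A 0 * A 0 * K 1 * K 2 * K 2 + (1/2) * A 1 * A 1 * K 1 * K 2 * K 2 + (1/2) * A 2 * A 2 * K 1 * K 2 * K 2 + (1/2) * A 3 * A 3 * K 1 * K 2 * K 2) * hθ 2 2 + ((-1) * A 0 * A 0 * K 1 * K 2 * K 3 + (1) * A 1 * A 1 * K 1 * K 2 * K 3 + (1) * A 2 * A 2 * K 1 * K 2 * K 3 + (1) * A 3 * A 3 * K 1 * K 2 * K 3) * hθ 2 3 + ((-1/2) * A 0 * A 0 * K 1 * K 3 * K 3 + (1/2) * A 1 * A 1 * K 1 * K 3 * K 3 + (1/2) * A 2 * A 2 * K 1 * K 3 * K 3 + (1/2) * A 3 * A 3 * K 1 * K 3 * K 3) * hθ 3 3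
  · linear_combination ((-1) * A 0 * A 1 * K 0 * θ 2 1 + (-1) * A 0 * A 1 * K 1 * θ 2 0 + (1) * A 0 * A 1 * K 2 * θ 0 1 + (1) * A 0 * A 1 * K 2 * θ 1 0 + (2) * A 0 * A 2 * K 0 * θ 0 0 + (-1) * A 0 * A 2 * K 0 * θ 2 2 + (-1/2) * A 0 * A 2 * K 1 * θ 0 1 + (-3/2) * A 0 * A 2 * K 1 * θ 1 0 + (1/2) * A 0 * A 2 * K 2 * θ 0 2 + (-3/2) * A 0 * A 2 * K 2 * θ 2 0 + (-1/2) * A 0 * A 2 * K 3 * θ 0 3 + (-3/2) * A 0 * A 2 * K 3 * θ 3 0 + (-1) * A 0 * A 3 * K 0 * θ 2 3 + (1) * A 0 * A 3 * K 2 * θ 0 3 + (1) * A 0 * A 3 * K 2 * θ 3 0 + (-1) * A 0 * A 3 * K 3 * θ 2 0 + (-1/2) * A 0 * A 0 * K 0 * θ 2 0 + (-1/2) * A 0 * A 0 * K 1 * θ 2 1 + (1) * A 0 * A 0 * K 2 * θ 0 0 + (-1/2) * A 0 * A 0 * K 2 * θ 2 2 + (-1/2) * A 0 * A 0 * K 3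 * θ 2 3 + (3/2) * A 1 * A 2 * K 0 * θ 0 1 + (1/2) * A 1 * A 2 * K 0 * θ 1 0 + (-2) * A 1 * A 2 * K 1 * θ 1 1 + (-1) * A 1 * A 2 * K 1 * θ 2 2 + (1/2) * A 1 * A 2 * K 2 * θ 1 2 + (-3/2) * A 1 * A 2 * K 2 * θ 2 1 + (-1/2) * A 1 * A 2 * K 3 * θ 1 3 + (-3/2) * A 1 * A 2 * K 3 * θ 3 1 + (-1) * A 1 * A 3 * K 1 * θ 2 3 + (1) * A 1 * A 3 * K 2 * θ 1 3 + (1) * A 1 * A 3 * K 2 * θ 3 1 + (-1) * A 1 * A 3 * K 3 * θ 2 1 + (-1/2) * A 1 * A 1 * K 0 * θ 2 0 + (-1/2) * A 1 * A 1 * K 1 * θ 2 1 + (1) * A 1 * A 1 * K 2 * θ 1 1 + (1/2) * A 1 * A 1 * K 2 * θ 2 2 + (1/2) * A 1 * A 1 * K 3 * θ 2 3 + (3/2) * A 2 * A 3 * K 0 * θ 0 3 + (1/2) * A 2 * A 3 * K 0 * θ 3 0 + (-3/2) * A 2 * A 3 * K 1 * θ 1 3 + (-1/2) * A 2 * A 3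 * K 1 * θ 3 1 + (-3/2) * A 2 * A 3 * K 2 * θ 2 3 + (1/2) * A 2 * A 3 * K 2 * θ 3 2 + (-1) * A 2 * A 3 * K 3 * θ 2 2 + (-2) * A 2 * A 3 * K 3 * θ 3 3 + (3/2) * A 2 * A 2 * K 0 * θ 0 2 + (-3/2) * A 2 * A 2 * K 1 * θ 1 2 + (-3/2) * A 2 * A 2 * K 2 * θ 2 2 + (-3/2) * A 2 * A 2 * K 3 * θ 3 2 + (-1/2) * A 3 * A 3 * K 0 * θ 2 0 + (1/2) * A 3 * A 3 * K 1 * θ 2 1 + (1/2) * A 3 * A 3 * K 2 * θ 2 2 + (1) * A 3 * A 3 * K 2 * θ 3 3 + (-1/2) * A 3 * A 3 * K 3 * θ 2 3) * h1 + ((1/2) * A 0 * K 0 * K 1 * θ 2 1 + (1/2) * A 0 * K 0 * K 2 * θ 2 2 + (1/2) * A 0 * K 0 * K 3 * θ 2 3 + (1/2) * A 0 * K 0 * K 0 * θ 2 0 + (1/2) * A 0 * K 1 * K 2 * θ 0 1 + (-1/2) * A 0 * K 1 * K 2 * θ 1 0 + (-1) * A 0 * K 1 * K 1 * θ 2 0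 + (1/2) * A 0 * K 2 * K 3 * θ 0 3 + (-1/2) * A 0 * K 2 * K 3 * θ 3 0 + (1/2) * A 0 * K 2 * K 2 * θ 0 2 + (-3/2) * A 0 * K 2 * K 2 * θ 2 0 + (-1) * A 0 * K 3 * K 3 * θ 2 0 + (-1/2) * A 1 * K 0 * K 1 * θ 2 0 + (1/2) * A 1 * K 0 * K 2 * θ 0 1 + (-1/2) * A 1 * K 0 * K 2 * θ 1 0 + (1) * A 1 * K 0 * K 0 * θ 2 1 + (1/2) * A 1 * K 1 * K 2 * θ 2 2 + (1/2) * A 1 * K 1 * K 3 * θ 2 3 + (-1/2) * A 1 * K 1 * K 1 * θ 2 1 + (1/2) * A 1 * K 2 * K 3 * θ 1 3 + (-1/2) * A 1 * K 2 * K 3 * θ 3 1 + (1/2) * A 1 * K 2 * K 2 * θ 1 2 + (-3/2) * A 1 * K 2 * K 2 * θ 2 1 + (-1) * A 1 * K 3 * K 3 * θ 2 1 + (2) * A 2 * K 0 * K 1 * θ 0 1 + (2) * A 2 * K 0 * K 1 * θ 1 0 + (5/2) * A 2 * K 0 * K 2 * θ 0 2 + (1) * A 2 * K 0 * K 2 *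 θ 2 0 + (2) * A 2 * K 0 * K 3 * θ 0 3 + (2) * A 2 * K 0 * K 3 * θ 3 0 + (-2) * A 2 * K 0 * K 0 * θ 0 0 + (1) * A 2 * K 0 * K 0 * θ 2 2 + (-5/2) * A 2 * K 1 * K 2 * θ 1 2 + (-1) * A 2 * K 1 * K 2 * θ 2 1 + (-2) * A 2 * K 1 * K 3 * θ 1 3 + (-2) * A 2 * K 1 * K 3 * θ 3 1 + (-2) * A 2 * K 1 * K 1 * θ 1 1 + (-1) * A 2 * K 1 * K 1 * θ 2 2 + (-1) * A 2 * K 2 * K 3 * θ 2 3 + (-5/2) * A 2 * K 2 * K 3 * θ 3 2 + (-5/2) * A 2 * K 2 * K 2 * θ 2 2 + (-1) * A 2 * K 3 * K 3 * θ 2 2 + (-2) * A 2 * K 3 * K 3 * θ 3 3 + (1/2) * A 3 * K 0 * K 2 * θ 0 3 + (-1/2) * A 3 * K 0 * K 2 * θ 3 0 + (-1/2) * A 3 * K 0 * K 3 * θ 2 0 + (1) * A 3 * K 0 * K 0 * θ 2 3 + (-1/2) * A 3 * K 1 * K 2 * θ 1 3 + (1/2) * A 3 * K 1 * K 2 * θ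 3 1 + (1/2) * A 3 * K 1 * K 3 * θ 2 1 + (-1) * A 3 * K 1 * K 1 * θ 2 3 + (1/2) * A 3 * K 2 * K 3 * θ 2 2 + (-3/2) * A 3 * K 2 * K 2 * θ 2 3 + (1/2) * A 3 * K 2 * K 2 * θ 3 2 + (-1/2) * A 3 * K 3 * K 3 * θ 2 3) * h2 + ((-1/2) * A 0 * A 0 * K 0 * K 0 * K 2 + (1/2) * A 1 * A 1 * K 0 * K 0 * K 2 + (1/2) * A 2 * A 2 * K 0 * K 0 * K 2 + (1/2) * A 3 * A 3 * K 0 * K 0 * K 2) * hθ 0 0 + ((1) * A 0 * A 0 * K 0 * K 1 * K 2 + (-1) * A 1 * A 1 * K 0 * K 1 * K 2 + (-1) * A 2 * A 2 * K 0 * K 1 * K 2 + (-1) * A 3 * A 3 * K 0 * K 1 * K 2) * hθ 0 1 + ((1) * A 0 * A 0 * K 0 * K 2 * K 2 + (-1) * A 1 * A 1 * K 0 * K 2 * K 2 + (-1) * A 2 * A 2 * K 0 * K 2 * K 2 + (-1) * A 3 * A 3 * K 0 * K 2 * K 2) * hθ 0 2 + ((1) * A 0 * A 0 * K 0 * K 2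 * K 3 + (-1) * A 1 * A 1 * K 0 * K 2 * K 3 + (-1) * A 2 * A 2 * K 0 * K 2 * K 3 + (-1) * A 3 * A 3 * K 0 * K 2 * K 3) * hθ 0 3 + ((-1/2) * A 0 * A 0 * K 1 * K 1 * K 2 + (1/2) * A 1 * A 1 * K 1 * K 1 * K 2 + (1/2) * A 2 * A 2 * K 1 * K 1 * K 2 + (1/2) * A 3 * A 3 * K 1 * K 1 * K 2) * hθ 1 1 + ((-1) * A 0 * A 0 * K 1 * K 2 * K 2 + (1) * A 1 * A 1 * K 1 * K 2 * K 2 + (1) * A 2 * A 2 * K 1 * K 2 * K 2 + (1) * A 3 * A 3 * K 1 * K 2 * K 2) * hθ 1 2 + ((-1) * A 0 * A 0 * K 1 * K 2 * K 3 + (1) * A 1 * A 1 * K 1 * K 2 * K 3 + (1) * A 2 * A 2 * K 1 * K 2 * K 3 + (1) * A 3 * A 3 * K 1 * K 2 * K 3) * hθ 1 3 + ((-1/2) * A 0 * A 0 * K 2 * K 2 * K 2 + (1/2) * A 1 * A 1 * K 2 * K 2 * K 2 + (1/2) * A 2 * A 2 * K 2 * K 2 * K 2 + (1/2) * A 3 *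 A 3 * K 2 * K 2 * K 2) * hθ 2 2 + ((-1) * A 0 * A 0 * K 2 * K 2 * K 3 + (1) * A 1 * A 1 * K 2 * K 2 * K 3 + (1) * A 2 * A 2 * K 2 * K 2 * K 3 + (1) * A 3 * A 3 * K 2 * K 2 * K 3) * hθ 2 3 + ((-1/2) * A 0 * A 0 * K 2 * K 3 * K 3 + (1/2) * A 1 * A 1 * K 2 * K 3 * K 3 + (1/2) * A 2 * A 2 * K 2 * K 3 * K 3 + (1/2) * A 3 * A 3 * K 2 * K 3 * K 3) * hθ 3 3
  · linear_combination ((-1) * A 0 * A 1 * K 0 * θ 3 1 + (-1) * A 0 * A 1 * K 1 * θ 3 0 + (1) * A 0 * A 1 * K 3 * θ 0 1 + (1) * A 0 * A 1 * K 3 * θ 1 0 + (-1) * A 0 * A 2 * K 0 * θ 3 2 + (-1) * A 0 * A 2 * K 2 * θ 3 0 + (1) * A 0 * A 2 * K 3 * θ 0 2 + (1) * A 0 * A 2 * K 3 * θ 2 0 + (2) * A 0 * A 3 * K 0 * θ 0 0 + (-1) * A 0 * A 3 * K 0 * θ 3 3 + (-1/2) * A 0 * A 3 * K 1 * θ 0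 1 + (-3/2) * A 0 * A 3 * K 1 * θ 1 0 + (-1/2) * A 0 * A 3 * K 2 * θ 0 2 + (-3/2) * A 0 * A 3 * K 2 * θ 2 0 + (1/2) * A 0 * A 3 * K 3 * θ 0 3 + (-3/2) * A 0 * A 3 * K 3 * θ 3 0 + (-1/2) * A 0 * A 0 * K 0 * θ 3 0 + (-1/2) * A 0 * A 0 * K 1 * θ 3 1 + (-1/2) * A 0 * A 0 * K 2 * θ 3 2 + (1) * A 0 * A 0 * K 3 * θ 0 0 + (-1/2) * A 0 * A 0 * K 3 * θ 3 3 + (-1) * A 1 * A 2 * K 1 * θ 3 2 + (-1) * A 1 * A 2 * K 2 * θ 3 1 + (1) * A 1 * A 2 * K 3 * θ 1 2 + (1) * A 1 * A 2 * K 3 * θ 2 1 + (3/2) * A 1 * A 3 * K 0 * θ 0 1 + (1/2) * A 1 * A 3 * K 0 * θ 1 0 + (-2) * A 1 * A 3 * K 1 * θ 1 1 + (-1) * A 1 * A 3 * K 1 * θ 3 3 + (-1/2) * A 1 * A 3 * K 2 * θ 1 2 + (-3/2) * A 1 * A 3 * K 2 * θ 2 1 + (1/2) * A 1 * A 3 *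 K 3 * θ 1 3 + (-3/2) * A 1 * A 3 * K 3 * θ 3 1 + (-1/2) * A 1 * A 1 * K 0 * θ 3 0 + (-1/2) * A 1 * A 1 * K 1 * θ 3 1 + (1/2) * A 1 * A 1 * K 2 * θ 3 2 + (1) * A 1 * A 1 * K 3 * θ 1 1 + (1/2) * A 1 * A 1 * K 3 * θ 3 3 + (3/2) * A 2 * A 3 * K 0 * θ 0 2 + (1/2) * A 2 * A 3 * K 0 * θ 2 0 + (-3/2) * A 2 * A 3 * K 1 * θ 1 2 + (-1/2) * A 2 * A 3 * K 1 * θ 2 1 + (-2) * A 2 * A 3 * K 2 * θ 2 2 + (-1) * A 2 * A 3 * K 2 * θ 3 3 + (1/2) * A 2 * A 3 * K 3 * θ 2 3 + (-3/2) * A 2 * A 3 * K 3 * θ 3 2 + (-1/2) * A 2 * A 2 * K 0 * θ 3 0 + (1/2) * A 2 * A 2 * K 1 * θ 3 1 + (-1/2) * A 2 * A 2 * K 2 * θ 3 2 + (1) * A 2 * A 2 * K 3 * θ 2 2 + (1/2) * A 2 * A 2 * K 3 * θ 3 3 + (3/2) * A 3 * A 3 * K 0 * θ 0 3 + (-3/2)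 * A 3 * A 3 * K 1 * θ 1 3 + (-3/2) * A 3 * A 3 * K 2 * θ 2 3 + (-3/2) * A 3 * A 3 * K 3 * θ 3 3) * h1 + ((1/2) * A 0 * K 0 * K 1 * θ 3 1 + (1/2) * A 0 * K 0 * K 2 * θ 3 2 + (1/2) * A 0 * K 0 * K 3 * θ 3 3 + (1/2) * A 0 * K 0 * K 0 * θ 3 0 + (1/2) * A 0 * K 1 * K 3 * θ 0 1 + (-1/2) * A 0 * K 1 * K 3 * θ 1 0 + (-1) * A 0 * K 1 * K 1 * θ 3 0 + (1/2) * A 0 * K 2 * K 3 * θ 0 2 + (-1/2) * A 0 * K 2 * K 3 * θ 2 0 + (-1) * A 0 * K 2 * K 2 * θ 3 0 + (1/2) * A 0 * K 3 * K 3 * θ 0 3 + (-3/2) * A 0 * K 3 * K 3 * θ 3 0 + (-1/2) * A 1 * K 0 * K 1 * θ 3 0 + (1/2) * A 1 * K 0 * K 3 * θ 0 1 + (-1/2) * A 1 * K 0 * K 3 * θ 1 0 + (1) * A 1 * K 0 * K 0 * θ 3 1 + (1/2) * A 1 * K 1 * K 2 * θ 3 2 + (1/2) * A 1 * K 1 *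 K 3 * θ 3 3 + (-1/2) * A 1 * K 1 * K 1 * θ 3 1 + (1/2) * A 1 * K 2 * K 3 * θ 1 2 + (-1/2) * A 1 * K 2 * K 3 * θ 2 1 + (-1) * A 1 * K 2 * K 2 * θ 3 1 + (1/2) * A 1 * K 3 * K 3 * θ 1 3 + (-3/2) * A 1 * K 3 * K 3 * θ 3 1 + (-1/2) * A 2 * K 0 * K 2 * θ 3 0 + (1/2) * A 2 * K 0 * K 3 * θ 0 2 + (-1/2) * A 2 * K 0 * K 3 * θ 2 0 + (1) * A 2 * K 0 * K 0 * θ 3 2 + (1/2) * A 2 * K 1 * K 2 * θ 3 1 + (-1/2) * A 2 * K 1 * K 3 * θ 1 2 + (1/2) * A 2 * K 1 * K 3 * θ 2 1 + (-1) * A 2 * K 1 * K 1 * θ 3 2 + (1/2) * A 2 * K 2 * K 3 * θ 3 3 + (-1/2) * A 2 * K 2 * K 2 * θ 3 2 + (1/2) * A 2 * K 3 * K 3 * θ 2 3 + (-3/2) * A 2 * K 3 * K 3 * θ 3 2 + (2) * A 3 * K 0 * K 1 * θ 0 1 + (2) * A 3 * K 0 * K 1 * θ 1 0 + (2) * A 3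 * K 0 * K 2 * θ 0 2 + (2) * A 3 * K 0 * K 2 * θ 2 0 + (5/2) * A 3 * K 0 * K 3 * θ 0 3 + (1) * A 3 * K 0 * K 3 * θ 3 0 + (-2) * A 3 * K 0 * K 0 * θ 0 0 + (1) * A 3 * K 0 * K 0 * θ 3 3 + (-2) * A 3 * K 1 * K 2 * θ 1 2 + (-2) * A 3 * K 1 * K 2 * θ 2 1 + (-5/2) * A 3 * K 1 * K 3 * θ 1 3 + (-1) * A 3 * K 1 * K 3 * θ 3 1 + (-2) * A 3 * K 1 * K 1 * θ 1 1 + (-1) * A 3 * K 1 * K 1 * θ 3 3 + (-5/2) * A 3 * K 2 * K 3 * θ 2 3 + (-1) * A 3 * K 2 * K 3 * θ 3 2 + (-2) * A 3 * K 2 * K 2 * θ 2 2 + (-1) * A 3 * K 2 * K 2 * θ 3 3 + (-5/2) * A 3 * K 3 * K 3 * θ 3 3) * h2 + ((-1/2) * A 0 * A 0 * K 0 * K 0 * K 3 + (1/2) * A 1 * A 1 * K 0 * K 0 * K 3 + (1/2) * A 2 * A 2 * K 0 * K 0 * K 3 + (1/2) * A 3 * A 3 * K 0 * K 0 * K 3)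 * hθ 0 0 + ((1) * A 0 * A 0 * K 0 * K 1 * K 3 + (-1) * A 1 * A 1 * K 0 * K 1 * K 3 + (-1) * A 2 * A 2 * K 0 * K 1 * K 3 + (-1) * A 3 * A 3 * K 0 * K 1 * K 3) * hθ 0 1 + ((1) * A 0 * A 0 * K 0 * K 2 * K 3 + (-1) * A 1 * A 1 * K 0 * K 2 * K 3 + (-1) * A 2 * A 2 * K 0 * K 2 * K 3 + (-1) * A 3 * A 3 * K 0 * K 2 * K 3) * hθ 0 2 + ((1) * A 0 * A 0 * K 0 * K 3 * K 3 + (-1) * A 1 * A 1 * K 0 * K 3 * K 3 + (-1) * A 2 * A 2 * K 0 * K 3 * K 3 + (-1) * A 3 * A 3 * K 0 * K 3 * K 3) * hθ 0 3 + ((-1/2) * A 0 * A 0 * K 1 * K 1 * K 3 + (1/2) * A 1 * A 1 * K 1 * K 1 * K 3 + (1/2) * A 2 * A 2 * K 1 * K 1 * K 3 + (1/2) * A 3 * A 3 * K 1 * K 1 * K 3) * hθ 1 1 + ((-1) * A 0 * A 0 * K 1 * K 2 * K 3 + (1) * A 1 * A 1 * K 1 * K 2 * K 3 + (1) * A 2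 * A 2 * K 1 * K 2 * K 3 + (1) * A 3 * A 3 * K 1 * K 2 * K 3) * hθ 1 2 + ((-1) * A 0 * A 0 * K 1 * K 3 * K 3 + (1) * A 1 * A 1 * K 1 * K 3 * K 3 + (1) * A 2 * A 2 * K 1 * K 3 * K 3 + (1) * A 3 * A 3 * K 1 * K 3 * K 3) * hθ 1 3 + ((-1/2) * A 0 * A 0 * K 2 * K 2 * K 3 + (1/2) * A 1 * A 1 * K 2 * K 2 * K 3 + (1/2) * A 2 * A 2 * K 2 * K 2 * K 3 + (1/2) * A 3 * A 3 * K 2 * K 2 * K 3) * hθ 2 2 + ((-1) * A 0 * A 0 * K 2 * K 3 * K 3 + (1) * A 1 * A 1 * K 2 * K 3 * K 3 + (1) * A 2 * A 2 * K 2 * K 3 * K 3 + (1) * A 3 * A 3 * K 2 * K 3 * K 3) * hθ 2 3 + ((-1/2) * A 0 * A 0 * K 3 * K 3 * K 3 + (1/2) * A 1 * A 1 * K 3 * K 3 * K 3 + (1/2) * A 2 * A 2 * K 3 * K 3 * K 3 + (1/2) * A 3 * A 3 * K 3 * K 3 * K 3) * hθ 3 3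

/- STATEMENT 3: the first-order NC correction to the Maxwell equation vanishes
identically on a plane wave: ∂_ν F̃^{(1)μν} = 0. -/
open scoped ContDiff in
theorem stmt_3 (θ : Fin 4 → Fin 4 → ℝ) (hθ : ∀ a b, θ a b = -θ b a)
    (K : Fin 4 → ℝ) (Φ : ℝ → Fin 4 → ℝ)
    (hΦ : ContDiff ℝ (⊤ : ℕ∞) Φ)
    (hK : mink K K = 0)
    (hKΦ : ∀ s : ℝ, (∑ μ, K μ * deriv (fun t => Φ t μ) s) = 0) :
    ∀ (μ : Fin 4) (x : Fin 4 → ℝ),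
      (∑ ν, pd ν (fun y => Ftil1 θ K Φ y μ ν) x) = 0 := by
  intro μ x
  -- the derivative functions a i = (Φ^i)'
  set a : Fin 4 → ℝ → ℝ := fun i s => deriv (fun t => Φ t i) s with ha_def
  have haC : ∀ i, ContDiff ℝ (∞ : WithTop ℕ∞) (a i) := by
    intro i
    have h1 : ContDiff ℝ (∞ : WithTop ℕ∞) (fun t => Φ t i) :=
      (((ContinuousLinearMap.proj i : (Fin 4 → ℝ) →L[ℝ] ℝ).contDiff).comp hΦ).of_le (by simp)
    exact (contDiff_infty_iff_deriv.mp h1).2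
  have haD : ∀ i, Differentiable ℝ (a i) := fun i => (haC i).differentiable (by norm_num)
  -- the profile functions g ν
  set g : Fin 4 → ℝ → ℝ := fun ν s => FT1c θ K (fun i => a i s) μ ν with hg_def
  have hgD : ∀ ν, Differentiable ℝ (g ν) := by
    intro ν
    have h0 := haD 0; have h1 := haD 1; have h2 := haD 2; have h3 := haD 3
    simp only [hg_def, FT1c, FHc, FLc, Fin.sum_univ_four]
    fun_prop
  -- derivative of the phase
  set L : (Fin 4 → ℝ) →L[ℝ] ℝ :=
    ∑ i, (ηd i * K i) • (ContinuousLinearMap.proj i : (Fin 4 → ℝ) →L[ℝ] ℝ) with hL_def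
  have hmink : ∀ y : Fin 4 → ℝ, HasFDerivAt (fun y => mink K y) L y := by
    intro y
    have he : (fun y : Fin 4 → ℝ => mink K y) = fun y => L y := by
      funext z
      simp [hL_def, mink, ContinuousLinearMap.sum_apply, mul_assoc]
    rw [he]
    exact L.hasFDerivAt
  have hLν : ∀ ν : Fin 4, L (Pi.single ν 1) = ηd ν * K ν := by
    intro ν
    simp [hL_def, ContinuousLinearMap.sum_apply, Pi.single_apply, Fin.sum_univ_four]
    fin_cases ν <;> simp [Fin.sum_univ_four]
  -- computing the partial derivatives
  have hpd : ∀ ν, pd ν (fun y => Ftil1 θ K Φ y μ ν) x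
      = ηd ν * K ν * deriv (g ν) (mink K x) := by
    intro ν
    have hfun : (fun y => Ftil1 θ K Φ y μ ν) = fun y => g ν (mink K y) := rfl
    have hcomp : HasFDerivAt (fun y => g ν (mink K y))
        (deriv (g ν) (mink K x) • L) x :=
      ((hgD ν (mink K x)).hasDerivAt).comp_hasFDerivAt x (hmink x)
    rw [pd, hfun, hcomp.fderiv]
    rw [ContinuousLinearMap.smul_apply, hLν ν, smul_eq_mul]
    ring
  simp only [hpd]
  -- the contracted profile vanishes identically
  have hQ1 : (∑ i, ηd i * K i * K i) = 0 := hK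
  have hQ2 : ∀ s, (∑ i, K i * a i s) = 0 := fun s => hKΦ s
  have hzero : ∀ s, (∑ ν, ηd ν * K ν * g ν s) = 0 := by
    intro s
    exact key θ hθ K (fun i => a i s) hQ1 (hQ2 s) μ
  have hsum : HasDerivAt (fun s => ∑ ν, ηd ν * K ν * g ν s)
      (∑ ν, ηd ν * K ν * deriv (g ν) (mink K x)) (mink K x) :=
    HasDerivAt.fun_sum fun ν _ => ((hgD ν (mink K x)).hasDerivAt).const_mul (ηd ν * K ν)
  have hfz : (fun s => ∑ ν, ηd ν * K ν * g ν s) = fun _ => (0:ℝ) := funext hzero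
  rw [hfz] at hsum
  exact hsum.unique (hasDerivAt_const _ 0)
end
end

section
/- A pointwise multilinear-algebra version of the plane-wave lemma: let θ be an antisymmetric bilinear form on ℝ^4 (with Minkowski metric for contractions), k null, and let ζ₁, …, ζ_{n+1} be vectors each orthogonal to k. Consider any vector-valued expression V^μ obtained by contracting n copies of θ, the n+1 vectors ζᵢ, and n+2 copies of k, leaving exactly one index free. Then V = 0. (Version for n = 2, fully explicit: every contraction of θ⊗θ ⊗ ζ₁⊗ζ₂⊗ζ₃ ⊗ k⊗k⊗k⊗k with one free index vanishes.) -/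
open scoped BigOperators

noncomputable section

def Kset : Finset (Fin 11) := {7, 8, 9, 10}
def Sset : Finset (Fin 11) := {4, 5, 6, 7, 8, 9, 10}
def Vv (k ζ₁ ζ₂ ζ₃ : Fin 4 → ℝ) : Fin 11 → Fin 4 → ℝ := fun i =>
  if i = 4 then ζ₁ else if i = 5 then ζ₂ else if i = 6 then ζ₃ else k

lemma factor_zero {m : ℕ} (c : Fin m → Fin 11) (hc : Function.Injective c)
    (A : (Fin 11 → Fin 4) → ℝ) (B : (Fin m → Fin 4) → ℝ)
    (hA : ∀ g g' : Fin 11 → Fin 4, (∀ i, (∀ t, c t ≠ i) → g i = g' i) → A g = A g')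
    (hB : ∑ w : Fin m → Fin 4, B w = 0) :
    ∑ g : Fin 11 → Fin 4, A g * B (fun t => g (c t)) = 0 := by
  classical
  set p : Fin 11 → Prop := fun i => ∃ t, c t = i with hp
  let e := (Equiv.piEquivPiSubtypeProd p (fun _ => Fin 4)).symm
  rw [← Equiv.sum_comp e (fun g => A g * B (fun t => g (c t)))]
  rw [Fintype.sum_prod_type]
  have hval : ∀ (u : ∀ _ : {x // p x}, Fin 4) (v : ∀ _ : {x // ¬ p x}, Fin 4),
      A (e (u, v)) * B (fun t => e (u, v) (c t))
        = A (e ((fun _ => 0), v)) * B (fun t => u ⟨c t, ⟨t, rfl⟩⟩) := by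
    intro u v
    have h1 : A (e (u, v)) = A (e ((fun _ => 0), v)) := by
      apply hA
      intro i hi
      have hpi : ¬ p i := by
        rintro ⟨t, ht⟩; exact hi t ht
      simp only [e, Equiv.piEquivPiSubtypeProd_symm_apply, dif_neg hpi]
    have h2 : (fun t => e (u, v) (c t)) = (fun t => u ⟨c t, ⟨t, rfl⟩⟩) := by
      funext t
      have hpt : p (c t) := ⟨t, rfl⟩
      simp only [e, Equiv.piEquivPiSubtypeProd_symm_apply, dif_pos hpt]
    rw [h1, h2]
  simp only [hval]
  have hBu : ∑ u : (∀ _ : {x // p x}, Fin 4), B (fun t => u ⟨c t, ⟨t, rfl⟩⟩) = 0 := by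
    have hd : Function.Bijective (fun t : Fin m => (⟨c t, ⟨t, rfl⟩⟩ : {x // p x})) := by
      constructor
      · intro a b hab
        exact hc (congrArg Subtype.val hab)
      · rintro ⟨i, t, ht⟩
        exact ⟨t, Subtype.ext ht⟩
    set d := Equiv.ofBijective _ hd with hdd
    have hdapp : ∀ t, d t = (⟨c t, ⟨t, rfl⟩⟩ : {x // p x}) := fun t => rfl
    let E : (Fin m → Fin 4) ≃ ({x // p x} → Fin 4) := Equiv.arrowCongr d (Equiv.refl _)
    have := Equiv.sum_comp E (fun u : {x // p x} → Fin 4 => B (fun t => u ⟨c t, ⟨t, rfl⟩⟩))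
    rw [← this]
    rw [← hB]
    apply Finset.sum_congr rfl
    intro w _
    congr 1
    funext t
    show w (d.symm (d t)) = w t
    rw [Equiv.symm_apply_apply]
  calc ∑ u : (∀ _ : {x // p x}, Fin 4), ∑ v : (∀ _ : {x // ¬ p x}, Fin 4),
        A (e ((fun _ => 0), v)) * B (fun t => u ⟨c t, ⟨t, rfl⟩⟩)
      = ∑ u : (∀ _ : {x // p x}, Fin 4),
          (∑ v : (∀ _ : {x // ¬ p x}, Fin 4), A (e ((fun _ => 0), v)))
            * B (fun t => u ⟨c t, ⟨t, rfl⟩⟩) := by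
        apply Finset.sum_congr rfl; intro u _; rw [Finset.sum_mul]
    _ = (∑ v : (∀ _ : {x // ¬ p x}, Fin 4), A (e ((fun _ => 0), v)))
          * ∑ u : (∀ _ : {x // p x}, Fin 4), B (fun t => u ⟨c t, ⟨t, rfl⟩⟩) := by
        rw [Finset.mul_sum]
    _ = 0 := by rw [hBu, mul_zero]

lemma prodV (k ζ₁ ζ₂ ζ₃ : Fin 4 → ℝ) (g : Fin 11 → Fin 4) :
    ∏ i ∈ Sset, Vv k ζ₁ ζ₂ ζ₃ i (g i)
      = ζ₁ (g 4) * ζ₂ (g 5) * ζ₃ (g 6) * k (g 7) * k (g 8) * k (g 9) * k (g 10) := by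
  show ∏ i ∈ ({4,5,6,7,8,9,10} : Finset (Fin 11)), Vv k ζ₁ ζ₂ ζ₃ i (g i) = _
  rw [Finset.prod_insert (by decide), Finset.prod_insert (by decide),
    Finset.prod_insert (by decide), Finset.prod_insert (by decide),
    Finset.prod_insert (by decide), Finset.prod_insert (by decide),
    Finset.prod_singleton]
  simp only [Vv, if_pos rfl,
    if_neg (show ¬(5:Fin 11) = 4 by decide), if_pos (show (5:Fin 11) = 5 from rfl),
    if_neg (show ¬(6:Fin 11) = 4 by decide), if_neg (show ¬(6:Fin 11) = 5 by decide),
    if_pos (show (6:Fin 11) = 6 from rfl),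
    if_neg (show ¬(7:Fin 11) = 4 by decide), if_neg (show ¬(7:Fin 11) = 5 by decide),
    if_neg (show ¬(7:Fin 11) = 6 by decide),
    if_neg (show ¬(8:Fin 11) = 4 by decide), if_neg (show ¬(8:Fin 11) = 5 by decide),
    if_neg (show ¬(8:Fin 11) = 6 by decide),
    if_neg (show ¬(9:Fin 11) = 4 by decide), if_neg (show ¬(9:Fin 11) = 5 by decide),
    if_neg (show ¬(9:Fin 11) = 6 by decide),
    if_neg (show ¬(10:Fin 11) = 4 by decide), if_neg (show ¬(10:Fin 11) = 5 by decide),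
    if_neg (show ¬(10:Fin 11) = 6 by decide), if_true]
  ring

lemma sumB4 (θ : Fin 4 → Fin 4 → ℝ) (hθ : ∀ a b, θ a b = -θ b a) (k : Fin 4 → ℝ) :
    ∑ w : Fin 4 → Fin 4,
      θ (w 0) (w 1) * (k (w 2) * k (w 3)) *
        (if w 0 = w 2 then ηd (w 0) else 0) * (if w 1 = w 3 then ηd (w 1) else 0) = 0 := by
  set B : (Fin 4 → Fin 4) → ℝ := fun w =>
    θ (w 0) (w 1) * (k (w 2) * k (w 3)) *
      (if w 0 = w 2 then ηd (w 0) else 0) * (if w 1 = w 3 then ηd (w 1) else 0) with hB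
  let π : Fin 4 → Fin 4 := ![1, 0, 3, 2]
  have hππ : ∀ t, π (π t) = t := by decide
  let E : (Fin 4 → Fin 4) ≃ (Fin 4 → Fin 4) :=
    { toFun := fun w => w ∘ π
      invFun := fun w => w ∘ π
      left_inv := fun w => by funext t; show w (π (π t)) = w t; rw [hππ]
      right_inv := fun w => by funext t; show w (π (π t)) = w t; rw [hππ] }
  have h := Equiv.sum_comp E B
  have h2 : ∀ w, B (E w) = - B w := by
    intro w
    show B (w ∘ π) = - B w
    have e0 : (w ∘ π) 0 = w 1 := rfl
    have e1 : (w ∘ π) 1 = w 0 := rfl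
    have e2 : (w ∘ π) 2 = w 3 := rfl
    have e3 : (w ∘ π) 3 = w 2 := rfl
    simp only [hB, e0, e1, e2, e3]
    rw [hθ (w 1) (w 0)]
    ring
  have : ∑ w : Fin 4 → Fin 4, B w = - ∑ w : Fin 4 → Fin 4, B w := by
    conv_lhs => rw [← h]
    rw [← Finset.sum_neg_distrib]
    exact Finset.sum_congr rfl fun w _ => h2 w
  linarith

lemma VvK (k ζ₁ ζ₂ ζ₃ : Fin 4 → ℝ) : ∀ x ∈ Kset, Vv k ζ₁ ζ₂ ζ₃ x = k := by
  intro x hx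
  fin_cases hx <;> simp [Vv]


lemma sum_AB (θ : Fin 4 → Fin 4 → ℝ) (k ζ₁ ζ₂ ζ₃ : Fin 4 → ℝ)
    (σ : Equiv.Perm (Fin 11)) (p : Fin 11) (μ : Fin 4)
    (i0 j : Fin 11) (hσ : σ i0 = j) (hσ' : σ j = i0) (hlt : i0 < j)
    (hi0S : i0 ∈ Sset) (hjS : j ∈ Sset)
    (hpi : p ≠ i0) (hpj : p ≠ j)
    (hVsum : ∑ a, ηd a * Vv k ζ₁ ζ₂ ζ₃ i0 a * Vv k ζ₁ ζ₂ ζ₃ j a = 0) :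
    (∑ g : Fin 11 → Fin 4,
        (if g p = μ then (1 : ℝ) else 0) *
          (θ (g 0) (g 1) * θ (g 2) (g 3) * ζ₁ (g 4) * ζ₂ (g 5) * ζ₃ (g 6) *
            k (g 7) * k (g 8) * k (g 9) * k (g 10)) *
          ∏ i ∈ Finset.univ.filter (fun i => i < σ i),
            (if g i = g (σ i) then ηd (g i) else 0)) = 0 := by
  classical
  set W := Vv k ζ₁ ζ₂ ζ₃ with hW
  set P := Finset.univ.filter (fun i => i < σ i) with hPdef
  have hij : i0 ≠ j := ne_of_lt hlt
  have hi0P : i0 ∈ P := by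
    rw [hPdef]
    simp only [Finset.mem_filter, Finset.mem_univ, true_and]
    rw [hσ]
    exact hlt
  have hjP : j ∉ P := by
    rw [hPdef]
    simp only [Finset.mem_filter, Finset.mem_univ, true_and]
    rw [hσ']
    exact fun h => absurd hlt (asymm h)
  have hS03 : ∀ x ∈ Sset, x ≠ 0 ∧ x ≠ 1 ∧ x ≠ 2 ∧ x ≠ 3 := by decide
  set c : Fin 2 → Fin 11 := ![i0, j] with hc
  have hcinj : Function.Injective c := by
    intro a b hab
    fin_cases a <;> fin_cases b <;> simp_all [hc] <;>
      first
      | rfl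
      | exact absurd hab hij
      | exact absurd hab.symm hij
  set B : (Fin 2 → Fin 4) → ℝ := fun w =>
    W i0 (w 0) * W j (w 1) * (if w 0 = w 1 then ηd (w 0) else 0) with hB
  set A : (Fin 11 → Fin 4) → ℝ := fun g =>
    (if g p = μ then (1 : ℝ) else 0) * (θ (g 0) (g 1) * θ (g 2) (g 3)) *
      (∏ i ∈ (Sset.erase i0).erase j, W i (g i)) *
      ∏ i ∈ P.erase i0, (if g i = g (σ i) then ηd (g i) else 0) with hA
  have hjS' : j ∈ Sset.erase i0 := Finset.mem_erase.2 ⟨hij.symm, hjS⟩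
  have key : ∀ g : Fin 11 → Fin 4,
      (if g p = μ then (1 : ℝ) else 0) *
        (θ (g 0) (g 1) * θ (g 2) (g 3) * ζ₁ (g 4) * ζ₂ (g 5) * ζ₃ (g 6) *
          k (g 7) * k (g 8) * k (g 9) * k (g 10)) *
        ∏ i ∈ P, (if g i = g (σ i) then ηd (g i) else 0)
        = A g * B (fun t => g (c t)) := by
    intro g
    have e1 : ζ₁ (g 4) * ζ₂ (g 5) * ζ₃ (g 6) * k (g 7) * k (g 8) * k (g 9) * k (g 10)
        = ∏ i ∈ Sset, W i (g i) := (prodV k ζ₁ ζ₂ ζ₃ g).symm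
    have e2 : ∏ i ∈ Sset, W i (g i)
        = W i0 (g i0) * ∏ i ∈ Sset.erase i0, W i (g i) :=
      (Finset.mul_prod_erase Sset _ hi0S).symm
    have e3 : ∏ i ∈ Sset.erase i0, W i (g i)
        = W j (g j) * ∏ i ∈ (Sset.erase i0).erase j, W i (g i) :=
      (Finset.mul_prod_erase _ _ hjS').symm
    have e4 : ∏ i ∈ P, (if g i = g (σ i) then ηd (g i) else 0)
        = (if g i0 = g (σ i0) then ηd (g i0) else 0) *
            ∏ i ∈ P.erase i0, (if g i = g (σ i) then ηd (g i) else 0) :=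
      (Finset.mul_prod_erase P _ hi0P).symm
    have e5 : B (fun t => g (c t)) = W i0 (g i0) * W j (g j) *
        (if g i0 = g j then ηd (g i0) else 0) := rfl
    rw [show θ (g 0) (g 1) * θ (g 2) (g 3) * ζ₁ (g 4) * ζ₂ (g 5) * ζ₃ (g 6) *
          k (g 7) * k (g 8) * k (g 9) * k (g 10)
        = θ (g 0) (g 1) * θ (g 2) (g 3) *
          (ζ₁ (g 4) * ζ₂ (g 5) * ζ₃ (g 6) * k (g 7) * k (g 8) * k (g 9) * k (g 10)) by ring,
      e1, e2, e3, e4, hσ, hA, e5]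
    ring
  have hAind : ∀ g g' : Fin 11 → Fin 4,
      (∀ i, (∀ t, c t ≠ i) → g i = g' i) → A g = A g' := by
    intro g g' h
    have key2 : ∀ i : Fin 11, i ≠ i0 → i ≠ j → g i = g' i := by
      intro i h1 h2
      refine h i ?_
      intro t
      fin_cases t
      · exact h1.symm
      · exact h2.symm
    have hgp : g p = g' p := key2 p hpi hpj
    have hg0 : g 0 = g' 0 := key2 0 (Ne.symm (hS03 i0 hi0S).1) (Ne.symm (hS03 j hjS).1)
    have hg1 : g 1 = g' 1 := key2 1 (Ne.symm (hS03 i0 hi0S).2.1) (Ne.symm (hS03 j hjS).2.1)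
    have hg2 : g 2 = g' 2 := key2 2 (Ne.symm (hS03 i0 hi0S).2.2.1) (Ne.symm (hS03 j hjS).2.2.1)
    have hg3 : g 3 = g' 3 := key2 3 (Ne.symm (hS03 i0 hi0S).2.2.2) (Ne.symm (hS03 j hjS).2.2.2)
    have hprod1 : ∏ i ∈ (Sset.erase i0).erase j, W i (g i)
        = ∏ i ∈ (Sset.erase i0).erase j, W i (g' i) := by
      refine Finset.prod_congr rfl fun i hi => ?_
      have h2 := Finset.mem_erase.1 hi
      have h3 := Finset.mem_erase.1 h2.2
      rw [key2 i h3.1 h2.1]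
    have hprod2 : ∏ i ∈ P.erase i0, (if g i = g (σ i) then ηd (g i) else 0)
        = ∏ i ∈ P.erase i0, (if g' i = g' (σ i) then ηd (g' i) else 0) := by
      refine Finset.prod_congr rfl fun i hi => ?_
      have h2 := Finset.mem_erase.1 hi
      have hiP : i ∈ P := h2.2
      have hinej : i ≠ j := fun hh => hjP (hh ▸ hiP)
      have hσi1 : σ i ≠ i0 := by
        intro hh
        exact hinej (σ.injective (hh.trans hσ'.symm))
      have hσi2 : σ i ≠ j := by
        intro hh
        exact h2.1 (σ.injective (hh.trans hσ.symm))
      rw [key2 i h2.1 hinej, key2 (σ i) hσi1 hσi2]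
    rw [hA]
    simp only []
    rw [hgp, hg0, hg1, hg2, hg3, hprod1, hprod2]
  have hBsum : ∑ w : Fin 2 → Fin 4, B w = 0 := by
    rw [← Equiv.sum_comp (finTwoArrowEquiv (Fin 4)).symm B, Fintype.sum_prod_type]
    have step : ∀ a : Fin 4, ∑ b : Fin 4, B ((finTwoArrowEquiv (Fin 4)).symm (a, b))
        = ηd a * W i0 a * W j a := by
      intro a
      have : ∀ b : Fin 4, B ((finTwoArrowEquiv (Fin 4)).symm (a, b))
          = W i0 a * W j b * (if a = b then ηd a else 0) := by
        intro b; rfl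
      simp only [this, mul_ite, mul_zero, Finset.sum_ite_eq, Finset.mem_univ, if_true]
      ring
    rw [Finset.sum_congr rfl fun a _ => step a]
    exact hVsum
  calc ∑ g : Fin 11 → Fin 4,
        (if g p = μ then (1 : ℝ) else 0) *
          (θ (g 0) (g 1) * θ (g 2) (g 3) * ζ₁ (g 4) * ζ₂ (g 5) * ζ₃ (g 6) *
            k (g 7) * k (g 8) * k (g 9) * k (g 10)) *
          ∏ i ∈ P, (if g i = g (σ i) then ηd (g i) else 0)
      = ∑ g : Fin 11 → Fin 4, A g * B (fun t => g (c t)) :=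
        Finset.sum_congr rfl fun g _ => key g
    _ = 0 := factor_zero c hcinj A B hAind hBsum

lemma sum_C (θ : Fin 4 → Fin 4 → ℝ) (hθ : ∀ a b, θ a b = -θ b a)
    (k ζ₁ ζ₂ ζ₃ : Fin 4 → ℝ)
    (σ : Equiv.Perm (Fin 11)) (p : Fin 11) (hp : σ p = p) (μ : Fin 4)
    (a0 a1 b0 b1 ja jb : Fin 11)
    (hja : σ a0 = ja) (hjb : σ a1 = jb)
    (hja' : σ ja = a0) (hjb' : σ jb = a1)
    (hjaK : ja ∈ Kset) (hjbK : jb ∈ Kset)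
    (ha01 : a0 ≠ a1)
    (hb : b0 ≠ a0 ∧ b0 ≠ a1 ∧ b1 ≠ a0 ∧ b1 ≠ a1)
    (hS03 : ∀ x ∈ Sset, x ≠ a0 ∧ x ≠ a1 ∧ x ≠ b0 ∧ x ≠ b1)
    (hKa : ∀ x ∈ Kset, x ≠ a0 ∧ x ≠ a1 ∧ x ≠ b0 ∧ x ≠ b1 ∧ a0 < x ∧ a1 < x)
    (hKS : ∀ x ∈ Kset, x ∈ Sset)
    (hform : ∀ g : Fin 11 → Fin 4,
      θ (g 0) (g 1) * θ (g 2) (g 3) = θ (g a0) (g a1) * θ (g b0) (g b1)) :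
    (∑ g : Fin 11 → Fin 4,
        (if g p = μ then (1 : ℝ) else 0) *
          (θ (g 0) (g 1) * θ (g 2) (g 3) * ζ₁ (g 4) * ζ₂ (g 5) * ζ₃ (g 6) *
            k (g 7) * k (g 8) * k (g 9) * k (g 10)) *
          ∏ i ∈ Finset.univ.filter (fun i => i < σ i),
            (if g i = g (σ i) then ηd (g i) else 0)) = 0 := by
  classical
  set W := Vv k ζ₁ ζ₂ ζ₃ with hW
  set P := Finset.univ.filter (fun i => i < σ i) with hPdef
  -- basic distinctness facts
  have hjaa0 : ja ≠ a0 := (hKa ja hjaK).1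
  have hjaa1 : ja ≠ a1 := (hKa ja hjaK).2.1
  have hjba0 : jb ≠ a0 := (hKa jb hjbK).1
  have hjba1 : jb ≠ a1 := (hKa jb hjbK).2.1
  have hjajb : ja ≠ jb := fun h => ha01 (by rw [← hja', ← hjb', h])
  have hpa0 : p ≠ a0 := fun h => hjaa0 (by rw [← h, hp, h] at hja; rw [← hja])
  have hpa1 : p ≠ a1 := fun h => hjba1 (by rw [← h, hp, h] at hjb; rw [← hjb])
  have hpja : p ≠ ja := fun h => hjaa0 (by rw [← h, hp, h] at hja'; rw [hja'])
  have hpjb : p ≠ jb := fun h => hjba1 (by rw [← h, hp, h] at hjb'; rw [hjb'])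
  have ha0lt : a0 < ja := (hKa ja hjaK).2.2.2.2.1
  have ha1lt : a1 < jb := (hKa jb hjbK).2.2.2.2.2
  have ha0P : a0 ∈ P := by
    rw [hPdef]
    simp only [Finset.mem_filter, Finset.mem_univ, true_and]
    rw [hja]; exact ha0lt
  have ha1P : a1 ∈ P := by
    rw [hPdef]
    simp only [Finset.mem_filter, Finset.mem_univ, true_and]
    rw [hjb]; exact ha1lt
  have hjaP : ja ∉ P := by
    rw [hPdef]
    simp only [Finset.mem_filter, Finset.mem_univ, true_and]
    rw [hja']; exact fun h => absurd ha0lt (asymm h)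
  have hjbP : jb ∉ P := by
    rw [hPdef]
    simp only [Finset.mem_filter, Finset.mem_univ, true_and]
    rw [hjb']; exact fun h => absurd ha1lt (asymm h)
  set c : Fin 4 → Fin 11 := ![a0, a1, ja, jb] with hc
  have hcv : c 0 = a0 ∧ c 1 = a1 ∧ c 2 = ja ∧ c 3 = jb := ⟨rfl, rfl, rfl, rfl⟩
  have hcinj : Function.Injective c := by
    intro a b hab
    rw [hc] at hab
    fin_cases a <;> fin_cases b <;>
      simp only [Matrix.cons_val_zero, Matrix.cons_val_one, Matrix.head_cons,
        Matrix.cons_val_two, Matrix.tail_cons, Matrix.cons_val_three,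
        Matrix.cons_val_fin_one, Fin.isValue] at hab <;>
      first
      | rfl
      | exact absurd hab (by tauto)
      | exact absurd hab.symm (by tauto)
  set B : (Fin 4 → Fin 4) → ℝ := fun w =>
    θ (w 0) (w 1) * (k (w 2) * k (w 3)) *
      (if w 0 = w 2 then ηd (w 0) else 0) * (if w 1 = w 3 then ηd (w 1) else 0) with hB
  set A : (Fin 11 → Fin 4) → ℝ := fun g =>
    (if g p = μ then (1 : ℝ) else 0) * θ (g b0) (g b1) *
      (∏ i ∈ (Sset.erase ja).erase jb, W i (g i)) *
      ∏ i ∈ (P.erase a0).erase a1, (if g i = g (σ i) then ηd (g i) else 0) with hA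
  have hjaS : ja ∈ Sset := hKS ja hjaK
  have hjbS' : jb ∈ Sset.erase ja := Finset.mem_erase.2 ⟨hjajb.symm, hKS jb hjbK⟩
  have ha1P' : a1 ∈ P.erase a0 := Finset.mem_erase.2 ⟨ha01.symm, ha1P⟩
  have key : ∀ g : Fin 11 → Fin 4,
      (if g p = μ then (1 : ℝ) else 0) *
        (θ (g 0) (g 1) * θ (g 2) (g 3) * ζ₁ (g 4) * ζ₂ (g 5) * ζ₃ (g 6) *
          k (g 7) * k (g 8) * k (g 9) * k (g 10)) *
        ∏ i ∈ P, (if g i = g (σ i) then ηd (g i) else 0)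
        = A g * B (fun t => g (c t)) := by
    intro g
    have e1 : ζ₁ (g 4) * ζ₂ (g 5) * ζ₃ (g 6) * k (g 7) * k (g 8) * k (g 9) * k (g 10)
        = ∏ i ∈ Sset, W i (g i) := (prodV k ζ₁ ζ₂ ζ₃ g).symm
    have e2 : ∏ i ∈ Sset, W i (g i)
        = W ja (g ja) * ∏ i ∈ Sset.erase ja, W i (g i) :=
      (Finset.mul_prod_erase Sset _ hjaS).symm
    have e3 : ∏ i ∈ Sset.erase ja, W i (g i)
        = W jb (g jb) * ∏ i ∈ (Sset.erase ja).erase jb, W i (g i) :=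
      (Finset.mul_prod_erase _ _ hjbS').symm
    have e4 : ∏ i ∈ P, (if g i = g (σ i) then ηd (g i) else 0)
        = (if g a0 = g (σ a0) then ηd (g a0) else 0) *
            ∏ i ∈ P.erase a0, (if g i = g (σ i) then ηd (g i) else 0) :=
      (Finset.mul_prod_erase P _ ha0P).symm
    have e4' : ∏ i ∈ P.erase a0, (if g i = g (σ i) then ηd (g i) else 0)
        = (if g a1 = g (σ a1) then ηd (g a1) else 0) *
            ∏ i ∈ (P.erase a0).erase a1, (if g i = g (σ i) then ηd (g i) else 0) :=
      (Finset.mul_prod_erase _ _ ha1P').symm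
    have e5 : B (fun t => g (c t)) = θ (g a0) (g a1) * (k (g ja) * k (g jb)) *
        (if g a0 = g ja then ηd (g a0) else 0) * (if g a1 = g jb then ηd (g a1) else 0) := rfl
    have eWja : W ja = k := VvK k ζ₁ ζ₂ ζ₃ ja hjaK
    have eWjb : W jb = k := VvK k ζ₁ ζ₂ ζ₃ jb hjbK
    rw [show θ (g 0) (g 1) * θ (g 2) (g 3) * ζ₁ (g 4) * ζ₂ (g 5) * ζ₃ (g 6) *
          k (g 7) * k (g 8) * k (g 9) * k (g 10)
        = θ (g 0) (g 1) * θ (g 2) (g 3) *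
          (ζ₁ (g 4) * ζ₂ (g 5) * ζ₃ (g 6) * k (g 7) * k (g 8) * k (g 9) * k (g 10)) by ring,
      hform g, e1, e2, e3, e4, e4', hja, hjb, hA, e5, eWja, eWjb]
    ring
  have hAind : ∀ g g' : Fin 11 → Fin 4,
      (∀ i, (∀ t, c t ≠ i) → g i = g' i) → A g = A g' := by
    intro g g' h
    have key2 : ∀ i : Fin 11, i ≠ a0 → i ≠ a1 → i ≠ ja → i ≠ jb → g i = g' i := by
      intro i h1 h2 h3 h4
      refine h i ?_
      intro t
      fin_cases t
      · exact h1.symm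
      · exact h2.symm
      · exact h3.symm
      · exact h4.symm
    have hgp : g p = g' p := key2 p hpa0 hpa1 hpja hpjb
    have hgb0 : g b0 = g' b0 :=
      key2 b0 hb.1 hb.2.1 (fun h => (hKa ja hjaK).2.2.1 h.symm)
        (fun h => (hKa jb hjbK).2.2.1 h.symm)
    have hgb1 : g b1 = g' b1 :=
      key2 b1 hb.2.2.1 hb.2.2.2 (fun h => (hKa ja hjaK).2.2.2.1 h.symm)
        (fun h => (hKa jb hjbK).2.2.2.1 h.symm)
    have hprod1 : ∏ i ∈ (Sset.erase ja).erase jb, W i (g i)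
        = ∏ i ∈ (Sset.erase ja).erase jb, W i (g' i) := by
      refine Finset.prod_congr rfl fun i hi => ?_
      have h2 := Finset.mem_erase.1 hi
      have h3 := Finset.mem_erase.1 h2.2
      rw [key2 i (hS03 i h3.2).1 (hS03 i h3.2).2.1 h3.1 h2.1]
    have hprod2 : ∏ i ∈ (P.erase a0).erase a1, (if g i = g (σ i) then ηd (g i) else 0)
        = ∏ i ∈ (P.erase a0).erase a1, (if g' i = g' (σ i) then ηd (g' i) else 0) := by
      refine Finset.prod_congr rfl fun i hi => ?_
      have h2 := Finset.mem_erase.1 hi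
      have h3 := Finset.mem_erase.1 h2.2
      have hiP : i ∈ P := h3.2
      have hija : i ≠ ja := fun hh => hjaP (hh ▸ hiP)
      have hijb : i ≠ jb := fun hh => hjbP (hh ▸ hiP)
      have hs1 : σ i ≠ a0 := fun hh => hija (σ.injective (hh.trans hja'.symm))
      have hs2 : σ i ≠ a1 := fun hh => hijb (σ.injective (hh.trans hjb'.symm))
      have hs3 : σ i ≠ ja := fun hh => h3.1 (σ.injective (hh.trans hja.symm))
      have hs4 : σ i ≠ jb := fun hh => h2.1 (σ.injective (hh.trans hjb.symm))
      rw [key2 i h3.1 h2.1 hija hijb, key2 (σ i) hs1 hs2 hs3 hs4]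
    rw [hA]
    simp only []
    rw [hgp, hgb0, hgb1, hprod1, hprod2]
  calc ∑ g : Fin 11 → Fin 4,
        (if g p = μ then (1 : ℝ) else 0) *
          (θ (g 0) (g 1) * θ (g 2) (g 3) * ζ₁ (g 4) * ζ₂ (g 5) * ζ₃ (g 6) *
            k (g 7) * k (g 8) * k (g 9) * k (g 10)) *
          ∏ i ∈ P, (if g i = g (σ i) then ηd (g i) else 0)
      = ∑ g : Fin 11 → Fin 4, A g * B (fun t => g (c t)) :=
        Finset.sum_congr rfl fun g _ => key g
    _ = 0 := factor_zero c hcinj A B hAind (sumB4 θ hθ k)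

/- STATEMENT 18 (pointwise multilinear-algebra version of the plane-wave lemma, n = 2):
let θ be antisymmetric, k null and ζ₁, ζ₂, ζ₃ orthogonal to k.  The tensor
θ ⊗ θ ⊗ ζ₁ ⊗ ζ₂ ⊗ ζ₃ ⊗ k ⊗ k ⊗ k ⊗ k has 11 index slots; any full contraction of it,
pairing 10 of the slots with the (diagonal) metric η via an involution σ with a single
fixed slot p (the free index μ), vanishes. -/
theorem stmt_18 (θ : Fin 4 → Fin 4 → ℝ) (hθ : ∀ a b, θ a b = -θ b a)
    (k ζ₁ ζ₂ ζ₃ : Fin 4 → ℝ)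
    (hk : mink k k = 0)
    (h1 : mink k ζ₁ = 0) (h2 : mink k ζ₂ = 0) (h3 : mink k ζ₃ = 0)
    (σ : Equiv.Perm (Fin 11)) (hinv : ∀ i, σ (σ i) = i)
    (p : Fin 11) (hp : σ p = p) (huniq : ∀ i, σ i = i → i = p) :
    ∀ μ : Fin 4,
      (∑ g : Fin 11 → Fin 4,
        (if g p = μ then (1 : ℝ) else 0) *
          (θ (g 0) (g 1) * θ (g 2) (g 3) * ζ₁ (g 4) * ζ₂ (g 5) * ζ₃ (g 6) *
            k (g 7) * k (g 8) * k (g 9) * k (g 10)) *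
          ∏ i ∈ Finset.univ.filter (fun i => i < σ i),
            (if g i = g (σ i) then ηd (g i) else 0)) = 0 := by
  intro μ
  classical
  have hVk : ∀ i ∈ Sset, ∑ a, ηd a * Vv k ζ₁ ζ₂ ζ₃ i a * k a = 0 := by
    have hgen : ∀ v : Fin 4 → ℝ, mink k v = 0 → ∑ a, ηd a * v a * k a = 0 := by
      intro v hv
      rw [← hv, mink]
      exact Finset.sum_congr rfl fun a _ => by ring
    intro i hi
    fin_cases hi
    · rw [show Vv k ζ₁ ζ₂ ζ₃ 4 = ζ₁ from by simp [Vv]]; exact hgen ζ₁ h1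
    · rw [show Vv k ζ₁ ζ₂ ζ₃ 5 = ζ₂ from by simp [Vv]]; exact hgen ζ₂ h2
    · rw [show Vv k ζ₁ ζ₂ ζ₃ 6 = ζ₃ from by simp [Vv]]; exact hgen ζ₃ h3
    · rw [VvK k ζ₁ ζ₂ ζ₃ 7 (by decide)]; exact hgen k hk
    · rw [VvK k ζ₁ ζ₂ ζ₃ 8 (by decide)]; exact hgen k hk
    · rw [VvK k ζ₁ ζ₂ ζ₃ 9 (by decide)]; exact hgen k hk
    · rw [VvK k ζ₁ ζ₂ ζ₃ 10 (by decide)]; exact hgen k hk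
  have hVK : ∀ i ∈ Sset, ∀ j ∈ Sset, (i ∈ Kset ∨ j ∈ Kset) →
      ∑ a, ηd a * Vv k ζ₁ ζ₂ ζ₃ i a * Vv k ζ₁ ζ₂ ζ₃ j a = 0 := by
    intro i hi j hj hor
    rcases hor with hK | hK
    · rw [VvK k ζ₁ ζ₂ ζ₃ i hK]
      rw [show (∑ a, ηd a * k a * Vv k ζ₁ ζ₂ ζ₃ j a)
          = ∑ a, ηd a * Vv k ζ₁ ζ₂ ζ₃ j a * k a from
        Finset.sum_congr rfl fun a _ => by ring]
      exact hVk j hj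
    · rw [VvK k ζ₁ ζ₂ ζ₃ j hK]
      exact hVk i hi
  by_cases hABc : ∃ i0 j : Fin 11, σ i0 = j ∧ i0 < j ∧ i0 ∈ Sset ∧ j ∈ Sset ∧
      (i0 ∈ Kset ∨ j ∈ Kset)
  · obtain ⟨i0, j, hσ1, hσ2, hσ3, hσ4, hσ5⟩ := hABc
    have hσ' : σ j = i0 := by rw [← hσ1, hinv]
    have hpi : p ≠ i0 := by
      intro h
      have : σ i0 = i0 := by rw [← h, hp]
      exact (ne_of_lt hσ2) (hσ1.symm.trans this).symm
    have hpj : p ≠ j := by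
      intro h
      have : σ j = j := by rw [← h, hp]
      exact (ne_of_lt hσ2) (hσ'.symm.trans this)
    exact sum_AB θ k ζ₁ ζ₂ ζ₃ σ p μ i0 j hσ1 hσ' hσ2 hσ3 hσ4 hpi hpj
      (hVK i0 hσ3 j hσ4 hσ5)
  · have hKΘ : ∀ j ∈ Kset, j ≠ p → σ j ∈ ({0, 1, 2, 3} : Finset (Fin 11)) := by
      intro j hj hjp
      have hnefix : σ j ≠ j := fun h => hjp (huniq j h)
      by_contra hcon
      have hσjS : σ j ∈ Sset := by
        have hall : ∀ x : Fin 11, x ∈ ({0, 1, 2, 3} : Finset (Fin 11)) ∨ x ∈ Sset := by decide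
        rcases hall (σ j) with h | h
        · exact absurd h hcon
        · exact h
      have hjS : j ∈ Sset := (by decide : ∀ x ∈ Kset, x ∈ Sset) j hj
      rcases hnefix.lt_or_gt with hlt | hgt
      · exact hABc ⟨σ j, j, hinv j, hlt, hσjS, hjS, Or.inr hj⟩
      · exact hABc ⟨j, σ j, rfl, hgt, hjS, hσjS, Or.inl hj⟩
    have pig3 : ∀ a b c : Fin 11, a ∈ ({0, 1, 2, 3} : Finset (Fin 11)) →
        b ∈ ({0, 1, 2, 3} : Finset (Fin 11)) → c ∈ ({0, 1, 2, 3} : Finset (Fin 11)) →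
        a ≠ b → a ≠ c → b ≠ c →
        ((a = 0 ∨ b = 0 ∨ c = 0) ∧ (a = 1 ∨ b = 1 ∨ c = 1)) ∨
        ((a = 2 ∨ b = 2 ∨ c = 2) ∧ (a = 3 ∨ b = 3 ∨ c = 3)) := by decide
    obtain ⟨j1, j2, j3, hj1, hj2, hj3, hne12, hne13, hne23, hq1, hq2, hq3⟩ :
        ∃ j1 j2 j3 : Fin 11, j1 ∈ Kset ∧ j2 ∈ Kset ∧ j3 ∈ Kset ∧
          j1 ≠ j2 ∧ j1 ≠ j3 ∧ j2 ≠ j3 ∧ j1 ≠ p ∧ j2 ≠ p ∧ j3 ≠ p := by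
      by_cases h7 : p = 7
      · subst h7
        exact ⟨8, 9, 10, by decide, by decide, by decide, by decide, by decide, by decide,
          by decide, by decide, by decide⟩
      by_cases h8 : p = 8
      · subst h8
        exact ⟨7, 9, 10, by decide, by decide, by decide, by decide, by decide, by decide,
          by decide, by decide, by decide⟩
      by_cases h9 : p = 9
      · subst h9
        exact ⟨7, 8, 10, by decide, by decide, by decide, by decide, by decide, by decide,
          by decide, by decide, by decide⟩
      · exact ⟨7, 8, 9, by decide, by decide, by decide, by decide, by decide, by decide,
          fun h => h7 h.symm, fun h => h8 h.symm, fun h => h9 h.symm⟩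
    have ht1 := hKΘ j1 hj1 hq1
    have ht2 := hKΘ j2 hj2 hq2
    have ht3 := hKΘ j3 hj3 hq3
    have hd12 : σ j1 ≠ σ j2 := fun h => hne12 (σ.injective h)
    have hd13 : σ j1 ≠ σ j3 := fun h => hne13 (σ.injective h)
    have hd23 : σ j2 ≠ σ j3 := fun h => hne23 (σ.injective h)
    have getK : ∀ x : Fin 11, (σ j1 = x ∨ σ j2 = x ∨ σ j3 = x) → σ x ∈ Kset := by
      rintro x (h | h | h)
      · rw [← h, hinv]; exact hj1
      · rw [← h, hinv]; exact hj2
      · rw [← h, hinv]; exact hj3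
    rcases pig3 (σ j1) (σ j2) (σ j3) ht1 ht2 ht3 hd12 hd13 hd23 with ⟨ha, hb⟩ | ⟨ha, hb⟩
    · exact sum_C θ hθ k ζ₁ ζ₂ ζ₃ σ p hp μ 0 1 2 3 (σ 0) (σ 1) rfl rfl (hinv 0) (hinv 1)
        (getK 0 ha) (getK 1 hb) (by decide)
        ⟨by decide, by decide, by decide, by decide⟩ (by decide)
        ((by decide : ∀ x ∈ Kset, x ≠ 0 ∧ x ≠ 1 ∧ x ≠ 2 ∧ x ≠ 3 ∧ (0:Fin 11) < x ∧ (1:Fin 11) < x))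
        (by decide) (fun g => rfl)
    · exact sum_C θ hθ k ζ₁ ζ₂ ζ₃ σ p hp μ 2 3 0 1 (σ 2) (σ 3) rfl rfl (hinv 2) (hinv 3)
        (getK 2 ha) (getK 3 hb) (by decide)
        ⟨by decide, by decide, by decide, by decide⟩ (by decide)
        ((by decide : ∀ x ∈ Kset, x ≠ 2 ∧ x ≠ 3 ∧ x ≠ 0 ∧ x ≠ 1 ∧ (2:Fin 11) < x ∧ (3:Fin 11) < x))
        (by decide) (fun g => mul_comm _ _)
end
end
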